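/- Let Θ_B > 1 and Θ_th > 1, and let G_B, G_F be independent Gamma random variables with integer shape m ≥ 1 and rates λ_B, λ_F > 0. For ρ > 0 set ε1(ρ) = (Θ_B − 1)/ρ, ε2(ρ) = Θ_B(Θ_th − 1)/ρ, ε0(ρ) = ε1(ρ) + ε2(ρ), and define the DPA outage probability P_out^{DPA}(ρ) = P(G_B ≤ ε1(ρ)) + P(G_B > ε1(ρ), G_F > G_B, G_F < ε2(ρ)G_B/(G_B − ε1(ρ))) + P(G_B > ε1(ρ), G_F < Θ_B G_B/(ρG_B + 1), R_F²(G_B,G_F) < log₂ Θ_th) + P(G_B > ε1(ρ), Θ_B G_B/(ρG_B + 1) < G_F < G_B, G_F < ε0(ρ)), where R_F²(g_B,g_F) = log₂(1 + ρω̄(g_B)g_F/(1 + ρω(g_B)g_F)) with ω(g_B) = (ρg_B + 1)(Θ_B − 1)/(ρg_B Θ_B) and ω̄ = 1 − ω. Then limsup_{ρ → ∞} ρ^m · P_out^{DPA}(ρ) < ∞; in particular lim_{ρ → ∞} P_out^{DPA}(ρ) = 0 for all Θ_B, Θ_th > 1, so the DPA scheme has no outage probability floor and achieves diversity order m. -/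
import Mathlib


open MeasureTheory ProbabilityTheory Filter

/-- The law of a Gamma random variable with integer shape `m` and rate `l`: the measure on ℝ
with density f(x) = l^m x^(m−1) e^(−lx)/Γ(m) for x > 0 (w.r.t. Lebesgue measure). -/
noncomputable def gammaLaw (m : ℕ) (l : ℝ) : Measure ℝ :=
  volume.withDensity fun x =>
    ENNReal.ofReal
      (if 0 < x then l ^ m * x ^ (m - 1) * Real.exp (-(l * x)) / Real.Gamma m else 0)

/-- The second-stage-SIC grant-free rate R_F²(g_B,g_F) = log₂(1 + ρω̄g_F/(1 + ρωg_F)) with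
ω = ω(g_B) = (ρg_B + 1)(Θ_B − 1)/(ρg_B Θ_B) and ω̄ = 1 − ω. -/
noncomputable def rateF2 (ρ ΘB gB gF : ℝ) : ℝ :=
  Real.logb 2
    (1 + ρ * (1 - (ρ * gB + 1) * (ΘB - 1) / (ρ * gB * ΘB)) * gF /
      (1 + ρ * ((ρ * gB + 1) * (ΘB - 1) / (ρ * gB * ΘB)) * gF))

lemma gammaLaw_Iic_le (m : ℕ) (hm : 1 ≤ m) (l : ℝ) (hl : 0 < l) (t : ℝ) (ht : 0 < t) :
    gammaLaw m l (Set.Iic t) ≤ ENNReal.ofReal ((l * t) ^ m / m.factorial) := by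
  have hm0 : (0:ℝ) < (m:ℝ) := by exact_mod_cast Nat.lt_of_lt_of_le Nat.zero_lt_one hm
  have hΓpos : 0 < Real.Gamma m := Real.Gamma_pos_of_pos hm0
  have h1 : gammaLaw m l (Set.Iic t)
      = ∫⁻ x in Set.Iic t, ENNReal.ofReal
        (if 0 < x then l ^ m * x ^ (m - 1) * Real.exp (-(l * x)) / Real.Gamma m else 0) := by
    rw [gammaLaw, withDensity_apply _ measurableSet_Iic]
  have h2 : (∫⁻ x in Set.Iic t, ENNReal.ofReal
        (if 0 < x then l ^ m * x ^ (m - 1) * Real.exp (-(l * x)) / Real.Gamma m else 0))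
      ≤ ∫⁻ x in Set.Iic t, (Set.Ioc (0:ℝ) t).indicator
          (fun x => ENNReal.ofReal (l ^ m * x ^ (m - 1) / Real.Gamma m)) x := by
    apply setLIntegral_mono' measurableSet_Iic
    intro x hx
    by_cases hx0 : 0 < x
    · rw [if_pos hx0, Set.indicator_of_mem (Set.mem_Ioc.mpr ⟨hx0, hx⟩)]
      apply ENNReal.ofReal_le_ofReal
      have hexp : Real.exp (-(l * x)) ≤ 1 := by
        rw [Real.exp_le_one_iff]; nlinarith
      have hnum : 0 ≤ l ^ m * x ^ (m - 1) := by positivity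
      calc l ^ m * x ^ (m - 1) * Real.exp (-(l * x)) / Real.Gamma m
          ≤ l ^ m * x ^ (m - 1) * 1 / Real.Gamma m := by gcongr
        _ = l ^ m * x ^ (m - 1) / Real.Gamma m := by ring
    · rw [if_neg hx0]; simp
  have h3 : (∫⁻ x in Set.Iic t, (Set.Ioc (0:ℝ) t).indicator
          (fun x => ENNReal.ofReal (l ^ m * x ^ (m - 1) / Real.Gamma m)) x)
      = ∫⁻ x in Set.Ioc 0 t, ENNReal.ofReal (l ^ m * x ^ (m - 1) / Real.Gamma m) := by
    rw [lintegral_indicator measurableSet_Ioc, Measure.restrict_restrict measurableSet_Ioc,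
      Set.inter_eq_self_of_subset_left Set.Ioc_subset_Iic_self]
  have hint : IntegrableOn (fun x : ℝ => l ^ m * x ^ (m - 1) / Real.Gamma m) (Set.Ioc 0 t) := by
    apply Continuous.integrableOn_Ioc
    exact (continuous_const.mul (continuous_pow _)).div_const _
  have h4 : (∫⁻ x in Set.Ioc 0 t, ENNReal.ofReal (l ^ m * x ^ (m - 1) / Real.Gamma m))
      = ENNReal.ofReal (∫ x in Set.Ioc 0 t, l ^ m * x ^ (m - 1) / Real.Gamma m) := by
    rw [← ofReal_integral_eq_lintegral_ofReal hint]
    filter_upwards [ae_restrict_mem measurableSet_Ioc] with x hx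
    exact div_nonneg (mul_nonneg (pow_nonneg hl.le _) (pow_nonneg hx.1.le _)) hΓpos.le
  have h5 : (∫ x in Set.Ioc 0 t, l ^ m * x ^ (m - 1) / Real.Gamma m)
      = (l ^ m / Real.Gamma m) * (t ^ m / m) := by
    have : ∀ x : ℝ, l ^ m * x ^ (m - 1) / Real.Gamma m = (l ^ m / Real.Gamma m) * x ^ (m - 1) := by
      intro x; ring
    simp_rw [this]
    rw [integral_const_mul]
    rw [← intervalIntegral.integral_of_le ht.le, integral_pow]
    have hmm : m - 1 + 1 = m := Nat.sub_add_cancel hm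
    rw [hmm, zero_pow (by omega : m ≠ 0)]
    have hc : ((m - 1 : ℕ) : ℝ) + 1 = m := by exact_mod_cast hmm
    rw [hc]; ring
  have h6 : (l ^ m / Real.Gamma m) * (t ^ m / m) = (l * t) ^ m / m.factorial := by
    have hmm : m - 1 + 1 = m := Nat.sub_add_cancel hm
    have hΓ : Real.Gamma m = (m - 1).factorial := by
      rw [← hmm]; push_cast; rw [Real.Gamma_nat_eq_factorial]
    have hfac : (m.factorial : ℝ) = m * (m - 1).factorial := by
      rw [← hmm, Nat.factorial_succ]; push_cast [hmm]; ring
    rw [hΓ, hfac, mul_pow]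
    have : ((m-1).factorial : ℝ) ≠ 0 := by positivity
    field_simp
  rw [h1]
  calc _ ≤ _ := h2
    _ = _ := h3
    _ = _ := h4
    _ = ENNReal.ofReal ((l * t) ^ m / m.factorial) := by rw [h5, h6]

lemma prob_event_le {Ω : Type*} [MeasurableSpace Ω] (P : Measure Ω) [IsProbabilityMeasure P]
    (m : ℕ) (hm : 1 ≤ m) (l : ℝ) (hl : 0 < l)
    (G : Ω → ℝ) (hG : Measurable G) (hlaw : P.map G = gammaLaw m l)
    (t : ℝ) (ht : 0 < t) (s : Set Ω) (hs : s ⊆ {ω | G ω ≤ t}) :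
    (P s).toReal ≤ (l * t) ^ m / m.factorial := by
  have h2 : P {ω | G ω ≤ t} = gammaLaw m l (Set.Iic t) := by
    rw [← hlaw, Measure.map_apply hG measurableSet_Iic]; rfl
  have h4 : P s ≤ ENNReal.ofReal ((l * t) ^ m / m.factorial) :=
    (measure_mono hs).trans (h2 ▸ gammaLaw_Iic_le m hm l hl t ht)
  calc (P s).toReal ≤ (ENNReal.ofReal ((l * t) ^ m / m.factorial)).toReal :=
        ENNReal.toReal_mono ENNReal.ofReal_ne_top h4
    _ = _ := ENNReal.toReal_ofReal
      (div_nonneg (pow_nonneg (mul_nonneg hl.le ht.le) m) (Nat.cast_nonneg _))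

/-- with ε1(ρ) = (Θ_B − 1)/ρ, ε2(ρ) = Θ_B(Θ_th − 1)/ρ, ε0(ρ) = ε1(ρ) + ε2(ρ),
the DPA outage probability
P_out^{DPA}(ρ) = P(G_B ≤ ε1) + P(G_B > ε1, G_F > G_B, G_F < ε2 G_B/(G_B − ε1))
  + P(G_B > ε1, G_F < Θ_B G_B/(ρG_B + 1), R_F² < log₂ Θ_th)
  + P(G_B > ε1, Θ_B G_B/(ρG_B + 1) < G_F < G_B, G_F < ε0)
satisfies limsup_{ρ→∞} ρ^m·P_out^{DPA}(ρ) < ∞; in particular P_out^{DPA}(ρ) → 0 as ρ → ∞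
(no outage floor, diversity order m). -/
theorem stmt_19 {Ω : Type*} [MeasurableSpace Ω] (P : Measure Ω) [IsProbabilityMeasure P]
    (m : ℕ) (hm : 1 ≤ m) (lB lF : ℝ) (hlB : 0 < lB) (hlF : 0 < lF)
    (GB GF : Ω → ℝ) (hGB : Measurable GB) (hGF : Measurable GF)
    (hBlaw : P.map GB = gammaLaw m lB) (hFlaw : P.map GF = gammaLaw m lF)
    (hindep : IndepFun GB GF P)
    (ΘB Θth : ℝ) (hΘB : 1 < ΘB) (hΘth : 1 < Θth)
    (Pout : ℝ → ℝ)
    (hPout : ∀ ρ : ℝ, 0 < ρ →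
      Pout ρ =
        (P {ω | GB ω ≤ (ΘB - 1) / ρ}).toReal +
          (P {ω | (ΘB - 1) / ρ < GB ω ∧ GB ω < GF ω ∧
            GF ω < (ΘB * (Θth - 1) / ρ) * GB ω / (GB ω - (ΘB - 1) / ρ)}).toReal +
          (P {ω | (ΘB - 1) / ρ < GB ω ∧ GF ω < ΘB * GB ω / (ρ * GB ω + 1) ∧
            rateF2 ρ ΘB (GB ω) (GF ω) < Real.logb 2 Θth}).toReal +
          (P {ω | (ΘB - 1) / ρ < GB ω ∧ ΘB * GB ω / (ρ * GB ω + 1) < GF ω ∧ GF ω < GB ω ∧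
            GF ω < (ΘB - 1) / ρ + ΘB * (Θth - 1) / ρ}).toReal) :
    IsBoundedUnder (· ≤ ·) atTop (fun ρ : ℝ => ρ ^ m * Pout ρ) ∧
      Tendsto Pout atTop (nhds 0) := by
  have hΘ1 : (0:ℝ) < ΘB - 1 := by linarith
  have hΘ0 : (1:ℝ) < ΘB * Θth := by nlinarith
  set C : ℝ := (lB * (ΘB - 1)) ^ m / m.factorial + (lB * (ΘB * Θth - 1)) ^ m / m.factorial
      + (lF * ΘB) ^ m / m.factorial + (lF * (ΘB * Θth - 1)) ^ m / m.factorial with hC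
  have key : ∀ ρ : ℝ, 0 < ρ → Pout ρ ≤ C / ρ ^ m := by
    intro ρ hρ
    have he1 : (0:ℝ) < (ΘB - 1) / ρ := by positivity
    have he0 : (0:ℝ) < (ΘB * Θth - 1) / ρ := by
      apply div_pos (by linarith) hρ
    -- term 1
    have T1 : (P {ω | GB ω ≤ (ΘB - 1) / ρ}).toReal
        ≤ (lB * ((ΘB - 1) / ρ)) ^ m / m.factorial :=
      prob_event_le P m hm lB hlB GB hGB hBlaw _ he1 _ (fun ω h => h)
    -- term 2
    have T2 : (P {ω | (ΘB - 1) / ρ < GB ω ∧ GB ω < GF ω ∧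
            GF ω < (ΘB * (Θth - 1) / ρ) * GB ω / (GB ω - (ΘB - 1) / ρ)}).toReal
        ≤ (lB * ((ΘB * Θth - 1) / ρ)) ^ m / m.factorial := by
      apply prob_event_le P m hm lB hlB GB hGB hBlaw _ he0
      rintro ω ⟨h1, h2, h3⟩
      have ha : 0 < GB ω := he1.trans h1
      have hd : 0 < GB ω - (ΘB - 1) / ρ := sub_pos.mpr h1
      have h4 : GB ω * (GB ω - (ΘB - 1) / ρ) < (ΘB * (Θth - 1) / ρ) * GB ω :=
        (lt_div_iff₀ hd).mp (h2.trans h3)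
      have h5 : GB ω - (ΘB - 1) / ρ < ΘB * (Θth - 1) / ρ := by
        nlinarith [h4, ha]
      have hsum : (ΘB - 1) / ρ + ΘB * (Θth - 1) / ρ = (ΘB * Θth - 1) / ρ := by
        field_simp; ring
      show GB ω ≤ (ΘB * Θth - 1) / ρ
      linarith
    -- term 3
    have hΘBρ : (0:ℝ) < ΘB / ρ := by positivity
    have T3 : (P {ω | (ΘB - 1) / ρ < GB ω ∧ GF ω < ΘB * GB ω / (ρ * GB ω + 1) ∧
            rateF2 ρ ΘB (GB ω) (GF ω) < Real.logb 2 Θth}).toReal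
        ≤ (lF * (ΘB / ρ)) ^ m / m.factorial := by
      apply prob_event_le P m hm lF hlF GF hGF hFlaw _ hΘBρ
      rintro ω ⟨h1, h2, -⟩
      have ha : 0 < GB ω := he1.trans h1
      have hden : 0 < ρ * GB ω + 1 := by positivity
      have : ΘB * GB ω / (ρ * GB ω + 1) ≤ ΘB / ρ := by
        rw [div_le_div_iff₀ hden hρ]
        nlinarith
      exact le_of_lt (h2.trans_le this)
    -- term 4
    have T4 : (P {ω | (ΘB - 1) / ρ < GB ω ∧ ΘB * GB ω / (ρ * GB ω + 1) < GF ω ∧ GF ω < GB ω ∧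
            GF ω < (ΘB - 1) / ρ + ΘB * (Θth - 1) / ρ}).toReal
        ≤ (lF * ((ΘB * Θth - 1) / ρ)) ^ m / m.factorial := by
      apply prob_event_le P m hm lF hlF GF hGF hFlaw _ he0
      rintro ω ⟨-, -, -, h4⟩
      have hsum : (ΘB - 1) / ρ + ΘB * (Θth - 1) / ρ = (ΘB * Θth - 1) / ρ := by
        field_simp; ring
      show GF ω ≤ (ΘB * Θth - 1) / ρ
      linarith
    rw [hPout ρ hρ]
    have hfac : (0:ℝ) < m.factorial := by positivity
    have hρm : (0:ℝ) < ρ ^ m := by positivity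
    have heq : (lB * ((ΘB - 1) / ρ)) ^ m / m.factorial
        + (lB * ((ΘB * Θth - 1) / ρ)) ^ m / m.factorial
        + (lF * (ΘB / ρ)) ^ m / m.factorial
        + (lF * ((ΘB * Θth - 1) / ρ)) ^ m / m.factorial = C / ρ ^ m := by
      have hx : ∀ l x : ℝ, (l * (x / ρ)) ^ m / m.factorial
          = (l * x) ^ m / m.factorial / ρ ^ m := by
        intro l x; rw [mul_div_assoc', div_pow]; ring
      rw [hx, hx, hx, hx, hC]; ring
    linarith
  have hC0 : 0 ≤ C := by
    rw [hC]
    have h1 : (0:ℝ) ≤ ΘB - 1 := hΘ1.le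
    have h2 : (0:ℝ) ≤ ΘB * Θth - 1 := by linarith
    have h3 : (0:ℝ) ≤ ΘB := by linarith
    have fac : (0:ℝ) ≤ m.factorial := by positivity
    refine add_nonneg (add_nonneg (add_nonneg ?_ ?_) ?_) ?_ <;>
      exact div_nonneg (pow_nonneg (by positivity) m) fac
  have hmne : m ≠ 0 := by omega
  constructor
  · refine ⟨C, ?_⟩
    rw [eventually_map]
    filter_upwards [eventually_gt_atTop (0:ℝ)] with ρ hρ
    have h := key ρ hρ
    calc ρ ^ m * Pout ρ ≤ ρ ^ m * (C / ρ ^ m) := by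
          exact mul_le_mul_of_nonneg_left h (by positivity)
      _ = C := by
          rw [mul_comm, div_mul_cancel₀ _ (pow_ne_zero m hρ.ne')]
  · have hg : Tendsto (fun ρ : ℝ => C / ρ ^ m) atTop (nhds 0) :=
      tendsto_const_nhds.div_atTop (tendsto_pow_atTop hmne)
    apply squeeze_zero' ?_ ?_ hg
    · filter_upwards [eventually_gt_atTop (0:ℝ)] with ρ hρ
      rw [hPout ρ hρ]
      have h0 : ∀ s : Set Ω, 0 ≤ (P s).toReal := fun s => ENNReal.toReal_nonneg
      exact add_nonneg (add_nonneg (add_nonneg (h0 _) (h0 _)) (h0 _)) (h0 _)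
    · filter_upwards [eventually_gt_atTop (0:ℝ)] with ρ hρ
      exact key ρ hρ
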